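/- Let π* be a symmetric Nash equilibrium of the preference game J(π₁,π₂) = π₁ᵀAπ₂ − 1/2 with supp(π*) = supp(π_sft). Consider the sequence π¹ = π_sft and π^{t+1} defined as the symmetric Nash equilibrium of the τ-KL-regularized game with reference π^t (i.e., π^{t+1} = Prox(π^t, (1/τ)·A π^{t+1})). Then Σ_{t=1}^∞ KL(π^{t+1}‖π^t) ≤ KL(π*‖π_sft) < ∞. -/

import Mathlib

/-!
The maximiser of `⟨c, p⟩ - KL(p‖r)` over the simplex is the Gibbs tilt `g = r e^c / Z`, because
`⟨c, p⟩ - KL(p‖r) = log Z - KL(p‖g)` and `KL(p‖g)` vanishes only at `p = g`. Comparing this identity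
at `p = π*` and `p = g` gives the three-point identity
`KL(π*‖π^{t+1}) + KL(π^{t+1}‖π^t) = KL(π*‖π^t) - ⟨c, π* - π^{t+1}⟩` with `c = Aπ^{t+1}/τ`.
Since `A + Aᵀ = 1` forces `π^{t+1}ᵀAπ^{t+1} = 1/2` and `π*` is a Nash equilibrium, the bracket is
nonnegative, so `KL(π*‖π^t)` drops by at least `KL(π^{t+1}‖π^t)` at each step and the path length
telescopes. The Gibbs form also shows that every iterate has exactly the support of `π_sft`.
-/

open Finset

noncomputable section

open Real InformationTheory

variable {ι : Type*} [Fintype ι]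

def discreteKL (p q : ι → ℝ) : ℝ := ∑ y, p y * log (p y / q y)

lemma mul_log_div_eq_mul_klFun {a b : ℝ} (hab : b = 0 → a = 0) :
    a * log (a / b) = b * klFun (a / b) + (a - b) := by
  rcases eq_or_ne b 0 with rfl | hb
  · simp [hab rfl]
  · rw [klFun_apply]; field_simp; ring

lemma discreteKL_eq_sum_klFun {p q : ι → ℝ} (hpq : ∀ y, q y = 0 → p y = 0)
    (hsum : ∑ y, p y = ∑ y, q y) :
    discreteKL p q = ∑ y, q y * klFun (p y / q y) := by
  have hzero : ∑ y, (p y - q y) = 0 := by rw [sum_sub_distrib, hsum, sub_self]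
  rw [discreteKL, sum_congr rfl fun y _ => mul_log_div_eq_mul_klFun (hpq y), sum_add_distrib,
    hzero, add_zero]

lemma discreteKL_nonneg {p q : ι → ℝ} (hp : p ∈ stdSimplex ℝ ι) (hq : q ∈ stdSimplex ℝ ι)
    (hpq : ∀ y, q y = 0 → p y = 0) : 0 ≤ discreteKL p q := by
  rw [discreteKL_eq_sum_klFun hpq (hp.2.trans hq.2.symm)]
  exact sum_nonneg fun y _ => mul_nonneg (hq.1 y) (klFun_nonneg (div_nonneg (hp.1 y) (hq.1 y)))

lemma eq_of_discreteKL_nonpos {p q : ι → ℝ} (hp : p ∈ stdSimplex ℝ ι) (hq : q ∈ stdSimplex ℝ ι)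
    (hpq : ∀ y, q y = 0 → p y = 0) (h : discreteKL p q ≤ 0) : p = q := by
  have hterm : ∀ y, 0 ≤ q y * klFun (p y / q y) := fun y =>
    mul_nonneg (hq.1 y) (klFun_nonneg (div_nonneg (hp.1 y) (hq.1 y)))
  rw [discreteKL_eq_sum_klFun hpq (hp.2.trans hq.2.symm)] at h
  have hzero := (sum_eq_zero_iff_of_nonneg fun y _ => hterm y).1
    (le_antisymm h (sum_nonneg fun y _ => hterm y))
  funext y
  rcases eq_or_ne (q y) 0 with h0 | h0
  · rw [h0, hpq y h0]
  · have := (mul_eq_zero.1 (hzero y (mem_univ y))).resolve_left h0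
    rw [klFun_eq_zero_iff (div_nonneg (hp.1 y) (hq.1 y))] at this
    exact (div_eq_one_iff_eq h0).1 this

lemma discreteKL_self (p : ι → ℝ) : discreteKL p p = 0 :=
  sum_eq_zero fun y _ => by rcases eq_or_ne (p y) 0 with h | h <;> simp [h]

/-- The closed form `r e^c / Z` of the proximal step `Prox(r, c)`. -/
def gibbs (r c : ι → ℝ) (y : ι) : ℝ := r y * exp (c y) / ∑ z, r z * exp (c z)

section gibbs

variable {r : ι → ℝ}

lemma sum_mul_exp_pos (hr : r ∈ stdSimplex ℝ ι) (c : ι → ℝ) : 0 < ∑ z, r z * exp (c z) := by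
  obtain ⟨i, -, hi⟩ := exists_ne_zero_of_sum_ne_zero (hr.2.trans_ne one_ne_zero)
  exact sum_pos' (fun z _ => mul_nonneg (hr.1 z) (exp_pos _).le)
    ⟨i, mem_univ i, mul_pos ((hr.1 i).lt_of_ne' hi) (exp_pos _)⟩

lemma gibbs_mem_stdSimplex (hr : r ∈ stdSimplex ℝ ι) (c : ι → ℝ) :
    gibbs r c ∈ stdSimplex ℝ ι := by
  refine ⟨fun y => div_nonneg (mul_nonneg (hr.1 y) (exp_pos _).le) (sum_mul_exp_pos hr c).le, ?_⟩
  simp only [gibbs]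
  rw [← sum_div, div_self (sum_mul_exp_pos hr c).ne']

lemma gibbs_eq_zero_iff (hr : r ∈ stdSimplex ℝ ι) (c : ι → ℝ) {y : ι} :
    gibbs r c y = 0 ↔ r y = 0 := by
  simp [gibbs, (sum_mul_exp_pos hr c).ne', exp_ne_zero]

lemma discreteKL_gibbs (hr : r ∈ stdSimplex ℝ ι) (c : ι → ℝ) {p : ι → ℝ} (hp : ∑ y, p y = 1)
    (hpr : ∀ y, r y = 0 → p y = 0) :
    discreteKL p (gibbs r c) =
      discreteKL p r - ∑ y, c y * p y + log (∑ z, r z * exp (c z)) := by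
  have hZ := (sum_mul_exp_pos hr c).ne'
  have hterm : ∀ y, p y * log (p y / gibbs r c y) =
      p y * log (p y / r y) - c y * p y + p y * log (∑ z, r z * exp (c z)) := fun y => by
    rcases eq_or_ne (p y) 0 with h0 | h0
    · simp [h0]
    have hry : r y ≠ 0 := mt (hpr y) h0
    rw [gibbs, div_div_eq_mul_div, log_div (by positivity) (by positivity), log_mul h0 hZ,
      log_mul hry (exp_ne_zero _), log_exp, log_div h0 hry]
    ring
  rw [discreteKL, sum_congr rfl fun y _ => hterm y, sum_add_distrib, sum_sub_distrib, ← sum_mul,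
    hp, one_mul, discreteKL]

lemma eq_gibbs_of_forall_le (hr : r ∈ stdSimplex ℝ ι) (c : ι → ℝ) {q : ι → ℝ}
    (hq : q ∈ stdSimplex ℝ ι) (hqr : ∀ y, r y = 0 → q y = 0)
    (hmax : ∀ p ∈ stdSimplex ℝ ι,
      (∑ y, c y * p y) - discreteKL p r ≤ (∑ y, c y * q y) - discreteKL q r) :
    q = gibbs r c := by
  have hg := gibbs_mem_stdSimplex hr c
  have hgg := discreteKL_gibbs hr c hg.2 fun y => (gibbs_eq_zero_iff hr c).2
  have hqg := discreteKL_gibbs hr c hq.2 hqr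
  rw [discreteKL_self] at hgg
  refine eq_of_discreteKL_nonpos hq hg (fun y hy => hqr y ((gibbs_eq_zero_iff hr c).1 hy)) ?_
  linarith [hmax _ hg]

lemma discreteKL_add_discreteKL_gibbs (hr : r ∈ stdSimplex ℝ ι) (c : ι → ℝ) {p : ι → ℝ}
    (hp : ∑ y, p y = 1) (hpr : ∀ y, r y = 0 → p y = 0) :
    discreteKL p (gibbs r c) + discreteKL (gibbs r c) r =
      discreteKL p r - (∑ y, c y * p y - ∑ y, c y * gibbs r c y) := by
  have hg := gibbs_mem_stdSimplex hr c
  have hgg := discreteKL_gibbs hr c hg.2 fun y => (gibbs_eq_zero_iff hr c).2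
  rw [discreteKL_self] at hgg
  rw [discreteKL_gibbs hr c hp hpr]
  linarith

end gibbs

lemma discreteKL_add_discreteKL_le_of_forall_le {r q s c : ι → ℝ} (hr : r ∈ stdSimplex ℝ ι)
    (hq : q ∈ stdSimplex ℝ ι) (hs : s ∈ stdSimplex ℝ ι) (hqr : ∀ y, r y = 0 → q y = 0)
    (hsr : ∀ y, r y = 0 → s y = 0)
    (hmax : ∀ p ∈ stdSimplex ℝ ι,
      (∑ y, c y * p y) - discreteKL p r ≤ (∑ y, c y * q y) - discreteKL q r)
    (hgain : ∑ y, c y * q y ≤ ∑ y, c y * s y) :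
    discreteKL s q + discreteKL q r ≤ discreteKL s r := by
  obtain rfl := eq_gibbs_of_forall_le hr c hq hqr hmax
  rw [discreteKL_add_discreteKL_gibbs hr c hs.2 hsr]
  linarith

lemma sum_sum_mul_add_sum_sum_mul_swap {A : ι → ι → ℝ} (hA : ∀ i j, A i j + A j i = 1)
    (p q : ι → ℝ) :
    ∑ i, ∑ j, p i * A i j * q j + ∑ i, ∑ j, q i * A i j * p j = (∑ i, p i) * ∑ j, q j := by
  rw [sum_comm (f := fun i j => q i * A i j * p j), ← sum_add_distrib, sum_mul_sum]
  refine sum_congr rfl fun i _ => ?_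
  rw [← sum_add_distrib]
  exact sum_congr rfl fun j _ => by linear_combination p i * q j * hA i j

lemma sum_mul_le_sum_mul_of_isNash {A : ι → ι → ℝ} (hA : ∀ i j, A i j + A j i = 1) {k : ℝ}
    (hk : 0 ≤ k) {q s : ι → ℝ} (hq : q ∈ stdSimplex ℝ ι) (hs : s ∈ stdSimplex ℝ ι)
    (hNash : ∀ p ∈ stdSimplex ℝ ι, ∑ i, ∑ j, p i * A i j * s j ≤ 1/2) :
    ∑ y, k * (∑ j, A y j * q j) * q y ≤ ∑ y, k * (∑ j, A y j * q j) * s y := by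
  have hpayoff : ∀ p : ι → ℝ,
      ∑ y, k * (∑ j, A y j * q j) * p y = k * ∑ i, ∑ j, p i * A i j * q j := fun p => by
    simp only [mul_sum, sum_mul]
    exact sum_congr rfl fun i _ => sum_congr rfl fun j _ => by ring
  have hqq := sum_sum_mul_add_sum_sum_mul_swap hA q q
  have hsq := sum_sum_mul_add_sum_sum_mul_swap hA s q
  rw [hq.2] at hqq hsq
  rw [hs.2] at hsq
  rw [hpayoff, hpayoff]
  exact mul_le_mul_of_nonneg_left (by linarith [hNash q hq]) hk

lemma summable_and_tsum_le_of_add_le {a b : ℕ → ℝ} (ha : ∀ t, 0 ≤ a t) (hb : ∀ t, 0 ≤ b t)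
    (hab : ∀ t, b (t + 1) + a t ≤ b t) : Summable a ∧ ∑' t, a t ≤ b 0 := by
  have htel : ∀ N, ∑ t ∈ range N, a t + b N ≤ b 0 := fun N => by
    induction N with
    | zero => simp
    | succ N ih => rw [sum_range_succ]; linarith [hab N]
  have hbound : ∀ N, ∑ t ∈ range N, a t ≤ b 0 := fun N => by linarith [htel N, hb N]
  exact ⟨summable_of_sum_range_le ha hbound, Real.tsum_le_of_sum_range_le ha hbound⟩

end

theorem comal_bounded_path_length_general {n : ℕ}
    (A : Fin n → Fin n → ℝ)
    (hApref : ∀ i j, A i j + A j i = 1)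
    (KL : (Fin n → ℝ) → (Fin n → ℝ) → ℝ)
    (hKL : ∀ p q, KL p q = ∑ y, p y * Real.log (p y / q y))
    (τ : ℝ) (hτ : 0 < τ)
    (πsft : Fin n → ℝ)
    (πstar : Fin n → ℝ) (hπstar : πstar ∈ stdSimplex ℝ (Fin n))
    (hsupp : ∀ y, πstar y ≠ 0 ↔ πsft y ≠ 0)
    (hNash : ∀ π ∈ stdSimplex ℝ (Fin n), ∑ i, ∑ j, π i * A i j * πstar j ≤ 1/2)
    (π : ℕ → Fin n → ℝ)
    (hπmem : ∀ t, π t ∈ stdSimplex ℝ (Fin n))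
    (hπsupp : ∀ t y, π t y ≠ 0 → πsft y ≠ 0)
    (hinit : π 0 = πsft)
    -- π^{t+1} = Prox(π^t, (1/τ)·Aπ^{t+1})
    (hfix : ∀ t, ∀ p ∈ stdSimplex ℝ (Fin n),
      (∑ y, (1/τ) * (∑ j, A y j * π (t+1) j) * p y) - KL p (π t)
        ≤ (∑ y, (1/τ) * (∑ j, A y j * π (t+1) j) * π (t+1) y)
            - KL (π (t+1)) (π t)) :
    Summable (fun t => KL (π (t+1)) (π t)) ∧
    ∑' t, KL (π (t+1)) (π t) ≤ KL πstar πsft := by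
  obtain rfl : KL = discreteKL := funext₂ hKL
  have hpos : ∀ t y, πsft y ≠ 0 → π t y ≠ 0 := by
    intro t
    induction t with
    | zero => exact fun y hy => hinit ▸ hy
    | succ t ih =>
      intro y hy
      rw [eq_gibbs_of_forall_le (hπmem t) _ (hπmem (t+1))
        (fun y => not_imp_not.1 fun h => ih y (hπsupp _ y h)) (hfix t), Ne,
        gibbs_eq_zero_iff (hπmem t)]
      exact ih y hy
  have hnext : ∀ t y, π t y = 0 → π (t+1) y = 0 := fun t y =>
    not_imp_not.1 fun h => hpos t y (hπsupp _ y h)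
  have hstar : ∀ t y, π t y = 0 → πstar y = 0 := fun t y =>
    not_imp_not.1 fun h => hpos t y ((hsupp y).1 h)
  have hgain := fun t => sum_mul_le_sum_mul_of_isNash hApref (one_div_nonneg.2 hτ.le)
    (hπmem (t+1)) hπstar hNash
  simpa [hinit] using summable_and_tsum_le_of_add_le
    (fun t => discreteKL_nonneg (hπmem (t+1)) (hπmem t) (hnext t))
    (fun t => discreteKL_nonneg hπstar (hπmem t) (hstar t))
    (fun t => discreteKL_add_discreteKL_le_of_forall_le (hπmem t) (hπmem (t+1)) hπstar (hnext t)
      (hstar t) (hfix t) (hgain t))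

/-- bounded path length of COMAL. With `π⁰ = π_sft` and each
`π^{t+1}` the symmetric Nash equilibrium of the `τ`-KL-regularized game with
reference `π^t` (equivalently `π^{t+1} = Prox(π^t, (1/τ)·Aπ^{t+1})`), and `π*`
a symmetric Nash equilibrium of `J` with `supp(π*) = supp(π_sft)`, the total
path length satisfies `Σ_t KL(π^{t+1}‖π^t) ≤ KL(π*‖π_sft) < ∞`. -/
theorem comal_bounded_path_length {n : ℕ}
    (A : Fin n → Fin n → ℝ)
    (hA01 : ∀ i j, A i j ∈ Set.Icc (0:ℝ) 1)
    (hApref : ∀ i j, A i j + A j i = 1)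
    (KL : (Fin n → ℝ) → (Fin n → ℝ) → ℝ)
    (hKL : ∀ p q, KL p q = ∑ y, p y * Real.log (p y / q y))
    (τ : ℝ) (hτ : 0 < τ)
    (πsft : Fin n → ℝ) (hπsft : πsft ∈ stdSimplex ℝ (Fin n))
    (πstar : Fin n → ℝ) (hπstar : πstar ∈ stdSimplex ℝ (Fin n))
    (hsupp : ∀ y, πstar y ≠ 0 ↔ πsft y ≠ 0)
    (hNash : ∀ π ∈ stdSimplex ℝ (Fin n), ∑ i, ∑ j, π i * A i j * πstar j ≤ 1/2)
    (π : ℕ → Fin n → ℝ)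
    (hπmem : ∀ t, π t ∈ stdSimplex ℝ (Fin n))
    (hπsupp : ∀ t y, π t y ≠ 0 → πsft y ≠ 0)
    (hinit : π 0 = πsft)
    -- π^{t+1} = Prox(π^t, (1/τ)·Aπ^{t+1})
    (hfix : ∀ t, ∀ p ∈ stdSimplex ℝ (Fin n),
      (∑ y, (1/τ) * (∑ j, A y j * π (t+1) j) * p y) - KL p (π t)
        ≤ (∑ y, (1/τ) * (∑ j, A y j * π (t+1) j) * π (t+1) y)
            - KL (π (t+1)) (π t)) :
    Summable (fun t => KL (π (t+1)) (π t)) ∧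
    ∑' t, KL (π (t+1)) (π t) ≤ KL πstar πsft :=
  comal_bounded_path_length_general A hApref KL hKL τ hτ πsft πstar hπstar hsupp hNash π hπmem
    hπsupp hinit hfix
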